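/- arXiv:2106.01299 — 5 statements merged into one kernel-verified Lean document; each statement's English description precedes it below -/
import Mathlib

section
/- The rack F(X) × X with operation (g,x) ▷ (h,y) = (gxg⁻¹h, y) together with the map X → F(X) × X, x ↦ (e, x), is the free rack on X: for every rack R and every function f : X → R there is a unique rack morphism φ : F(X) × X → R with φ(e, x) = f(x) for all x. -/
/-!
`F(X)` acts on `R` through `x ↦ (f x ▷ ·)`. Each generator acts by a rack automorphism (this is
self-distributivity), hence so does every `g`, and `φ (g, y) := g • f y` is a rack morphism.
Conversely, a morphism `φ` extending `f` satisfies `φ (x * h, y) = f x ▷ φ (h, y)`, since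
`(e, x) ▷ (h, y) = (x * h, y)`; as the generators generate `F(X)`, this forces
`φ (g, y) = g • f y`.
-/

def rackOp (X : Type*) (a b : FreeGroup X × X) : FreeGroup X × X :=
  (a.1 * FreeGroup.of a.2 * a.1⁻¹ * b.1, b.2)

namespace Equiv.Perm

variable {R : Type*}

def distribSubgroup (op : R → R → R) : Subgroup (Perm R) where
  carrier := {σ | ∀ r s, σ (op r s) = op (σ r) (σ s)}
  one_mem' _ _ := rfl
  mul_mem' {σ τ} hσ hτ r s := by rw [mul_apply, hτ, hσ]; rfl
  inv_mem' {σ} hσ r s := σ.injective <| by rw [hσ]; simp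

theorem apply_mul_eq_of_closure_eq_top {G : Type*} [Group G] {s : Set G}
    (hs : Subgroup.closure s = ⊤) (α : G →* Perm R) (ψ : G → R)
    (hψ : ∀ x ∈ s, ∀ h, ψ (x * h) = α x (ψ h)) (g h : G) : ψ (g * h) = α g (ψ h) := by
  have hg : g ∈ Subgroup.closure s := hs ▸ Subgroup.mem_top g
  induction hg using Subgroup.closure_induction generalizing h with
  | mem x hx => exact hψ x hx h
  | one => simp
  | mul g₁ g₂ _ _ ih₁ ih₂ => rw [mul_assoc, ih₁, ih₂, map_mul, mul_apply]
  | inv g _ ih =>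
    exact (α g).injective <| by
      rw [← ih, mul_inv_cancel_left, map_inv, inv_def, apply_symm_apply]

end Equiv.Perm

section FreeRackLift

variable {X R : Type*} {op : R → R → R} (hbij : ∀ r, Function.Bijective (op r)) (f : X → R)

noncomputable def freeRackAction : FreeGroup X →* Equiv.Perm R :=
  FreeGroup.lift fun x => Equiv.ofBijective (op (f x)) (hbij (f x))

theorem freeRackAction_of (x : X) (r : R) :
    freeRackAction hbij f (FreeGroup.of x) r = op (f x) r := by
  simp [freeRackAction]

theorem freeRackAction_mem_distribSubgroup
    (hdist : ∀ r s t, op r (op s t) = op (op r s) (op r t)) (g : FreeGroup X) :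
    freeRackAction hbij f g ∈ Equiv.Perm.distribSubgroup op :=
  FreeGroup.range_lift_le (by rintro _ ⟨x, rfl⟩ r s; exact hdist (f x) r s) ⟨g, rfl⟩

noncomputable def freeRackLift (p : FreeGroup X × X) : R :=
  freeRackAction hbij f p.1 (f p.2)

theorem freeRackLift_one (x : X) : freeRackLift hbij f (1, x) = f x := by
  simp [freeRackLift]

theorem freeRackLift_rackOp (hdist : ∀ r s t, op r (op s t) = op (op r s) (op r t))
    (a b : FreeGroup X × X) :
    freeRackLift hbij f (rackOp X a b) = op (freeRackLift hbij f a) (freeRackLift hbij f b) := by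
  obtain ⟨g, x⟩ := a
  obtain ⟨h, y⟩ := b
  set α := freeRackAction hbij f
  calc α (g * FreeGroup.of x * g⁻¹ * h) (f y)
      = α g (op (f x) (α g⁻¹ (α h (f y)))) := by
        simp only [map_mul, Equiv.Perm.mul_apply]
        exact congrArg (α g) (freeRackAction_of hbij f x _)
    _ = op (α g (f x)) (α h (f y)) := by
        rw [freeRackAction_mem_distribSubgroup hbij f hdist g, map_inv,
          Equiv.Perm.inv_def, Equiv.apply_symm_apply]

theorem eq_freeRackLift (φ : FreeGroup X × X → R)
    (hφ : ∀ a b, φ (rackOp X a b) = op (φ a) (φ b)) (hφ_one : ∀ x, φ (1, x) = f x) :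
    φ = freeRackLift hbij f := by
  funext ⟨g, y⟩
  have hmul_of (x : X) (h : FreeGroup X) :
      φ (FreeGroup.of x * h, y) = freeRackAction hbij f (FreeGroup.of x) (φ (h, y)) := by
    simpa [rackOp, hφ_one, freeRackAction_of] using hφ (1, x) (h, y)
  simpa [freeRackLift, hφ_one] using
    Equiv.Perm.apply_mul_eq_of_closure_eq_top (FreeGroup.closure_range_of X)
      (freeRackAction hbij f) (fun h => φ (h, y)) (by rintro _ ⟨x, rfl⟩; exact hmul_of x) g 1

end FreeRackLift

/-- The rack `F(X) × X` together with `x ↦ (e, x)` is the free rack on `X`: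
every map `f : X → R` to a rack extends uniquely to a rack morphism. -/
theorem stmt_4 (X : Type*) (R : Type*) (opR : R → R → R)
    (hbij : ∀ x : R, Function.Bijective (opR x))
    (hdist : ∀ x y z : R, opR x (opR y z) = opR (opR x y) (opR x z))
    (f : X → R) :
    ∃! φ : FreeGroup X × X → R,
      (∀ a b : FreeGroup X × X, φ (rackOp X a b) = opR (φ a) (φ b)) ∧
      (∀ x : X, φ (1, x) = f x) :=
  ⟨freeRackLift hbij f, ⟨freeRackLift_rackOp hbij f hdist, freeRackLift_one hbij f⟩,
    fun φ ⟨hφ, hφ_one⟩ => eq_freeRackLift hbij f φ hφ hφ_one⟩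
end

section
/- For any set X, the map F(X) × X → FQ(X) sending (g, x) to g x g⁻¹ (where FQ(X) is the conjugation quandle on the set of conjugates of generators in the free group F(X)) satisfies: (g, x) and (h, y) have the same image if and only if x = y and g⁻¹h is a power of x. -/
/-!
Conjugating by `g⁻¹` reduces the claim to: `of x * w = w * of y` forces `x = y` and
`w ∈ ⟨of x⟩`. Counting exponents of `x` (a homomorphism to `ℤ`) gives `x = y`. Then `w`
commutes with `of x`, so by Nielsen–Schreier the subgroup `⟨of x, w⟩` is free and abelian,
hence cyclic, say `⟨z⟩`. Writing `of x = z ^ k`, the exponent sum shows `k = ±1`, so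
`⟨z⟩ = ⟨of x⟩`.
-/

open Subgroup

namespace FreeGroup

variable {α : Type*}

theorem eq_of_commute_of {a b : α} (h : Commute (of a) (of b)) : a = b := by
  classical
  have hword : a = b ∧ b = a := by
    simpa [of, mul_mk, toWord_mk, reduce] using congrArg toWord h.eq
  exact hword.1

open Classical in
noncomputable def exponentSum (x : α) : FreeGroup α →* Multiplicative ℤ :=
  lift fun y => if y = x then Multiplicative.ofAdd 1 else 1

theorem exponentSum_of_self (x : α) : exponentSum x (of x) = Multiplicative.ofAdd 1 := by
  simp [exponentSum]

theorem exponentSum_of_of_ne {x y : α} (h : y ≠ x) : exponentSum x (of y) = 1 := by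
  simp [exponentSum, h]

theorem eq_of_of_mul_eq_mul_of {x y : α} {w : FreeGroup α} (h : of x * w = w * of y) :
    x = y := by
  by_contra hxy
  have hsum := congrArg (exponentSum x) h
  rw [_root_.map_mul, _root_.map_mul, exponentSum_of_self, exponentSum_of_of_ne (Ne.symm hxy), mul_one,
    mul_eq_right, ofAdd_eq_one] at hsum
  exact one_ne_zero hsum

theorem mem_zpowers_of_zpow_eq_of {x : α} {z : FreeGroup α} {k : ℤ} (h : z ^ k = of x) :
    z ∈ zpowers (of x) := by
  have hsum := congrArg (Multiplicative.toAdd ∘ exponentSum x) h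
  simp only [Function.comp_apply, MonoidHom.map_zpow, toAdd_zpow, exponentSum_of_self,
    toAdd_ofAdd, smul_eq_mul] at hsum
  refine mem_zpowers_iff.mpr ⟨k, ?_⟩
  rw [← h, ← zpow_mul, Int.isUnit_mul_self (.of_mul_eq_one _ hsum), zpow_one]

theorem isCyclic_of_subsingleton (α : Type*) [Subsingleton α] : IsCyclic (FreeGroup α) := by
  cases isEmpty_or_nonempty α
  · infer_instance
  · have := uniqueOfSubsingleton (Classical.arbitrary α)
    infer_instance

end FreeGroup

namespace IsFreeGroup

theorem subsingleton_generators (G : Type*) [Group G] [IsFreeGroup G] [IsMulCommutative G] :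
    Subsingleton (Generators G) where
  allEq a b := by
    have h : FreeGroup.of a * FreeGroup.of b = FreeGroup.of b * FreeGroup.of a := by
      simpa [of] using congrArg (toFreeGroup G) (isMulCommutative_iff.mp ‹_› (of a) (of b))
    exact FreeGroup.eq_of_commute_of h

instance isCyclic (G : Type*) [Group G] [IsFreeGroup G] [IsMulCommutative G] : IsCyclic G :=
  have := subsingleton_generators G
  (toFreeGroup G).isCyclic.mpr (FreeGroup.isCyclic_of_subsingleton _)

end IsFreeGroup

theorem FreeGroup.centralizer_of {α : Type*} (x : α) :
    centralizer {of x} = zpowers (of x) := by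
  refine le_antisymm (fun w hw => ?_) (zpowers_le.mpr (mem_centralizer_singleton_iff.mpr rfl))
  rw [mem_centralizer_singleton_iff] at hw
  have := isMulCommutative_closure (k := {of x, w}) <| by
    rintro a (rfl | rfl) b (rfl | rfl) <;> simp [hw]
  obtain ⟨z, hz⟩ := (closure {of x, w}).isCyclic_iff_exists_zpowers_eq_top.mp inferInstance
  have hx : of x ∈ zpowers z := hz ▸ subset_closure (by simp)
  have hw : w ∈ zpowers z := hz ▸ subset_closure (by simp)
  obtain ⟨k, hk⟩ := mem_zpowers_iff.mp hx
  exact zpowers_le.mpr (mem_zpowers_of_zpow_eq_of hk) hw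

/-- The map `F(X) × X → F(X)`, `(g, x) ↦ g x g⁻¹`, identifies `(g,x)` and
`(h,y)` if and only if `x = y` and `g⁻¹ h` is a power of `x`. -/
theorem stmt_5 (X : Type*) (g h : FreeGroup X) (x y : X) :
    g * FreeGroup.of x * g⁻¹ = h * FreeGroup.of y * h⁻¹ ↔
      x = y ∧ ∃ n : ℤ, g⁻¹ * h = (FreeGroup.of x) ^ n := by
  obtain ⟨w, rfl⟩ : ∃ w, h = g * w := ⟨g⁻¹ * h, by group⟩
  have hconj : g * FreeGroup.of x * g⁻¹ = g * w * FreeGroup.of y * (g * w)⁻¹ ↔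
      FreeGroup.of x * w = w * FreeGroup.of y := by
    simp only [mul_inv_rev, ← mul_assoc, mul_left_inj]
    simp only [mul_assoc, mul_right_inj]
    rw [← mul_assoc, eq_mul_inv_iff_mul_eq]
  rw [hconj, inv_mul_cancel_left]
  constructor
  · intro H
    obtain rfl := FreeGroup.eq_of_of_mul_eq_mul_of H
    have hw : w ∈ zpowers (FreeGroup.of x) :=
      FreeGroup.centralizer_of x ▸ mem_centralizer_singleton_iff.mpr H.symm
    obtain ⟨n, hn⟩ := mem_zpowers_iff.mp hw
    exact ⟨rfl, n, hn.symm⟩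
  · rintro ⟨rfl, n, rfl⟩
    exact ((Commute.refl _).zpow_right n).eq
end

section
/- In the free group F(X) on a set X, the centralizer of a generator x ∈ X is the cyclic subgroup generated by x. -/
/-!
If `c` is a letter such that `c :: g.toWord` is reduced and `g` commutes with `c`, then
`c :: g.toWord` is the reduced word of `c g = g c`, hence a sublist of `g.toWord ++ [c]` of the
same length. So `c :: g.toWord = g.toWord ++ [c]`, which forces `g.toWord` to be a power of `c`.
As `g.toWord` is reduced, at least one of the letters `x`, `x⁻¹` can be prepended to it without
cancellation.
-/

theorem List.eq_replicate_of_cons_eq_append {α : Type*} {c : α} :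
    ∀ {w : List α}, c :: w = w ++ [c] → w = replicate w.length c
  | [], _ => rfl
  | _ :: _, h => by
    obtain ⟨rfl, h⟩ := List.cons.inj h
    exact congrArg (c :: ·) (eq_replicate_of_cons_eq_append h)

namespace FreeGroup

variable {α : Type*}

theorem IsReduced.cons_or_cons_not {L : List (α × Bool)} (hL : IsReduced L) (a : α) :
    IsReduced ((a, true) :: L) ∨ IsReduced ((a, false) :: L) := by
  cases L with
  | nil => simp
  | cons b L => obtain ⟨b, _ | _⟩ := b <;> simp [hL]

theorem inv_of_eq_mk (a : α) : (of a)⁻¹ = mk [(a, false)] := by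
  simp [of, inv_mk, invRev]

variable [DecidableEq α]

theorem toWord_mk_singleton_mul {c : α × Bool} {g : FreeGroup α}
    (hc : IsReduced (c :: g.toWord)) : (mk [c] * g).toWord = c :: g.toWord := by
  rw [toWord_mul, toWord_mk, reduce_singleton, List.singleton_append, hc.reduce_eq]

theorem eq_pow_of_commute_of_isReduced_cons {c : α × Bool} {g : FreeGroup α}
    (hg : Commute g (mk [c])) (hc : IsReduced (c :: g.toWord)) :
    g = mk [c] ^ g.toWord.length := by
  have hsub : (c :: g.toWord).Sublist (g.toWord ++ [c]) := by
    simpa [hg.eq, toWord_mk_singleton_mul hc] using toWord_mul_sublist g (mk [c])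
  have hrep := List.eq_replicate_of_cons_eq_append (hsub.eq_of_length (by simp))
  rw [pow_mk, List.flatten_replicate_singleton, ← hrep, mk_toWord]

end FreeGroup

/-- In the free group on `X`, the centralizer of a generator `x` is the cyclic
subgroup generated by `x`. -/
theorem stmt_6 (X : Type*) (x : X) (g : FreeGroup X) :
    g * FreeGroup.of x = FreeGroup.of x * g ↔ ∃ n : ℤ, g = (FreeGroup.of x) ^ n := by
  classical
  refine ⟨fun hg => ?_, fun ⟨n, hn⟩ => hn ▸ (Commute.refl _).zpow_left n⟩
  rcases FreeGroup.isReduced_toWord.cons_or_cons_not x with hr | hr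
  · have hpow := FreeGroup.eq_pow_of_commute_of_isReduced_cons hg hr
    exact ⟨g.toWord.length, by rw [zpow_natCast]; exact hpow⟩
  · have hpow := FreeGroup.eq_pow_of_commute_of_isReduced_cons
      (FreeGroup.inv_of_eq_mk x ▸ Commute.inv_right hg) hr
    rw [← FreeGroup.inv_of_eq_mk, inv_pow] at hpow
    exact ⟨-g.toWord.length, by rw [zpow_neg, zpow_natCast]; exact hpow⟩
end

section
/- The ring ℤ[A^{±1}, E]/(E² − E(1−A)) is a pullback of the diagram ℤ[A^{±1}] → ℤ ← ℤ[A^{±1}], where both maps send A to 1, the first projection sends E to 1 − A, and the second sends E to 0. Concretely, the induced ring homomorphism from ℤ[A^{±1}, E]/(E² − E(1−A)) to the fiber product {(p, q) ∈ ℤ[A^{±1}] × ℤ[A^{±1}] : p(1) = q(1)} is a ring isomorphism. -/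
/-!
A polynomial `p` over `R` is sent to `(p(a), p(0))`; this kills `E² − aE`. If it also kills `p`,
then `E ∣ p`, say `p = E q`, and `a q(a) = 0` forces `q(a) = 0` when `a` is a non-zero-divisor,
so `E (E − a) ∣ p`. Since `a ∣ p(a) − p(0)`, and conversely `(v + a s, v)` is the image of
`v + sE`, the image is `{(u, v) | a ∣ u − v}`. For `a = 1 − A`, divisibility of `u − v` by
`1 − A` means `u(1) = v(1)`: clearing denominators reduces this to the factor theorem.
-/

open LaurentPolynomial Polynomial

/-- The rack ring `ℤ[A^±, E]/(E² − E(1−A))`, where `A = T 1` is the Laurent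
variable and `E` is a polynomial variable. -/
noncomputable abbrev RackRing : Type :=
  Polynomial (LaurentPolynomial ℤ) ⧸
    Ideal.span {(X : Polynomial (LaurentPolynomial ℤ)) ^ 2 - X * Polynomial.C ((1 : LaurentPolynomial ℤ) - T 1)}

namespace Polynomial

variable {R : Type*} [CommRing R] (a : R)

theorem span_le_ker_evalRingHom_prod :
    Ideal.span {X ^ 2 - X * C a} ≤ RingHom.ker ((evalRingHom a).prod (evalRingHom 0)) := by
  rw [Ideal.span_singleton_le_iff_mem, RingHom.mem_ker]
  simp only [RingHom.prod_apply, coe_evalRingHom, eval_sub, eval_pow, eval_mul, eval_X, eval_C,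
    Prod.mk_eq_zero]
  constructor <;> ring

theorem ker_evalRingHom_prod_le_span {a : R} (ha : a ∈ nonZeroDivisors R) :
    RingHom.ker ((evalRingHom a).prod (evalRingHom 0)) ≤ Ideal.span {X ^ 2 - X * C a} := by
  intro p hp
  simp only [RingHom.mem_ker, RingHom.prod_apply, coe_evalRingHom, Prod.mk_eq_zero] at hp
  obtain ⟨hpa, hp0⟩ := hp
  obtain ⟨q, rfl⟩ : X ∣ p := by rw [X_dvd_iff, coeff_zero_eq_eval_zero, hp0]
  have hqa : q.IsRoot a := by
    rw [eval_mul, eval_X, mul_comm] at hpa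
    exact (mem_nonZeroDivisors_iff.mp ha).2 _ hpa
  obtain ⟨r, rfl⟩ := dvd_iff_isRoot.mpr hqa
  exact Ideal.mem_span_singleton.mpr ⟨r, by ring⟩

noncomputable def evalPair : R[X] ⧸ Ideal.span {X ^ 2 - X * C a} →+* R × R :=
  Ideal.Quotient.lift _ ((evalRingHom a).prod (evalRingHom 0))
    fun _ hp => RingHom.mem_ker.mp (span_le_ker_evalRingHom_prod a hp)

@[simp]
theorem evalPair_mk (p : R[X]) :
    evalPair a (Ideal.Quotient.mk _ p) = (p.eval a, p.eval 0) :=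
  rfl

theorem evalPair_injective {a : R} (ha : a ∈ nonZeroDivisors R) :
    Function.Injective (evalPair a) :=
  RingHom.lift_injective_of_ker_le_ideal _ _ (ker_evalRingHom_prod_le_span ha)

theorem range_evalPair : Set.range (evalPair a) = {uv : R × R | a ∣ uv.1 - uv.2} := by
  ext ⟨u, v⟩
  simp only [Set.mem_range, Set.mem_ofPred_eq]
  constructor
  · rintro ⟨x, hx⟩
    obtain ⟨p, rfl⟩ := Ideal.Quotient.mk_surjective x
    obtain ⟨rfl, rfl⟩ := Prod.mk.inj (evalPair_mk a p ▸ hx)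
    simpa using sub_dvd_eval_sub a 0 p
  · rintro ⟨s, hs⟩
    refine ⟨Ideal.Quotient.mk _ (C v + X * C s), ?_⟩
    simp only [evalPair_mk, eval_add, eval_mul, eval_C, eval_X, zero_mul, add_zero, Prod.mk.injEq,
      and_true]
    linear_combination -hs

end Polynomial

namespace LaurentPolynomial

theorem one_sub_T_one_dvd_of_map_eq_zero {R : Type*} [CommRing R] (ε : R[T;T⁻¹] →+* R)
    (hC : ∀ r, ε (C r) = r) (hT : ε (T 1) = 1) {f : R[T;T⁻¹]} (hf : ε f = 0) : 1 - T 1 ∣ f := by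
  have hε : ε.comp toLaurent = evalRingHom 1 := by
    apply Polynomial.ringHom_ext
    · simp [hC]
    · simp [hT]
  obtain ⟨n, p, hp⟩ := f.exists_T_pow
  have hp1 : p.IsRoot 1 := by
    rw [IsRoot, ← coe_evalRingHom, ← hε, RingHom.comp_apply, hp, map_mul, hf, zero_mul]
  obtain ⟨q, rfl⟩ := dvd_iff_isRoot.mpr hp1
  have : 1 - T 1 ∣ f * T n := ⟨-toLaurent q, by
    rw [← hp]
    simp only [map_one, map_mul, map_sub, toLaurent_X, mul_neg]
    ring⟩
  exact (isUnit_T _).dvd_mul_right.mp this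

theorem map_eq_map_iff_one_sub_T_one_dvd (ε : ℤ[T;T⁻¹] →+* ℤ) (hT : ε (T 1) = 1)
    {u v : ℤ[T;T⁻¹]} : ε u = ε v ↔ 1 - T 1 ∣ u - v := by
  rw [← sub_eq_zero, ← map_sub]
  constructor
  · exact one_sub_T_one_dvd_of_map_eq_zero ε (fun r => eq_intCast (ε.comp C) r) hT
  · rintro ⟨s, hs⟩
    rw [hs, map_mul, map_sub, map_one, hT, sub_self, zero_mul]

end LaurentPolynomial

/-- The ring `ℤ[A^±, E]/(E² − E(1−A))` is the pullback of
`ℤ[A^±] → ℤ ← ℤ[A^±]`, both maps sending `A ↦ 1`: the ring map to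
`ℤ[A^±] × ℤ[A^±]` induced by `E ↦ 1 − A` and `E ↦ 0` is injective with image
the fiber product `{(p, q) | p(1) = q(1)}`. -/
theorem stmt_8 (ε : LaurentPolynomial ℤ →+* ℤ) (hε : ∀ n : ℤ, ε (T n) = 1) :
    ∃ Φ : RackRing →+*
        LaurentPolynomial ℤ × LaurentPolynomial ℤ,
      (∀ p : Polynomial (LaurentPolynomial ℤ),
        Φ (Ideal.Quotient.mk _ p) = (p.eval (1 - T 1), p.eval 0)) ∧
      Function.Injective Φ ∧
      Set.range Φ = {pq : LaurentPolynomial ℤ × LaurentPolynomial ℤ |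
        ε pq.1 = ε pq.2} := by
  have hne : (1 - T 1 : LaurentPolynomial ℤ) ≠ 0 := fun h => by
    simpa using congrArg (fun f => f.coeff 0) h
  refine ⟨evalPair (1 - T 1), evalPair_mk _, evalPair_injective (mem_nonZeroDivisors_of_ne_zero hne),
    ?_⟩
  rw [range_evalPair]
  ext uv
  exact (map_eq_map_iff_one_sub_T_one_dvd ε (hε 1)).symm
end

section
/- Let R be an abelian group with a rack structure ▷ such that ▷ : R × R → R is a homomorphism of abelian groups (i.e. (x+x') ▷ (y+y') = x ▷ y + x' ▷ y'). Define A(y) = 0 ▷ y and E(x) = x ▷ 0. Then A is an automorphism of the abelian group R, E is an endomorphism, x ▷ y = E(x) + A(y) for all x, y, and E² = E ∘ (id − A). -/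
/-!
Biadditivity alone splits `x ▷ y = (x + 0) ▷ (0 + y)` as `E x + A y` with `E`, `A` additive,
and `A` is bijective because it is a left multiplication. Expanding both sides of the
self-distributivity instance `x ▷ (x ▷ 0) = (x ▷ x) ▷ (x ▷ 0)` through this splitting and
cancelling the common term `A (E x)` leaves `E x = E (E x) + E (A x)`, i.e. `E² = E ∘ (id − A)`.
-/

section Biadditive

variable {R : Type*} {op : R → R → R}

theorem zero_op_add [AddZeroClass R]
    (hadd : ∀ x x' y y' : R, op (x + x') (y + y') = op x y + op x' y') (y y' : R) :
    op 0 (y + y') = op 0 y + op 0 y' := by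
  simpa using hadd 0 0 y y'

theorem add_op_zero [AddZeroClass R]
    (hadd : ∀ x x' y y' : R, op (x + x') (y + y') = op x y + op x' y') (x x' : R) :
    op (x + x') 0 = op x 0 + op x' 0 := by
  simpa using hadd x x' 0 0

theorem op_eq_op_zero_add_zero_op [AddZeroClass R]
    (hadd : ∀ x x' y y' : R, op (x + x') (y + y') = op x y + op x' y') (x y : R) :
    op x y = op x 0 + op 0 y := by
  simpa using hadd x 0 0 y

theorem op_zero_eq_op_op_zero_zero_add [AddRightCancelMonoid R]
    (hdist : ∀ x y z : R, op x (op y z) = op (op x y) (op x z))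
    (hadd : ∀ x x' y y' : R, op (x + x') (y + y') = op x y + op x' y') (x : R) :
    op x 0 = op (op x 0) 0 + op (op 0 x) 0 := by
  have h := hdist x x 0
  rw [op_eq_op_zero_add_zero_op hadd x, op_eq_op_zero_add_zero_op hadd (op x x),
    op_eq_op_zero_add_zero_op hadd x x, add_op_zero hadd] at h
  exact add_right_cancel h

theorem op_op_zero_zero [AddGroup R]
    (hdist : ∀ x y z : R, op x (op y z) = op (op x y) (op x z))
    (hadd : ∀ x x' y y' : R, op (x + x') (y + y') = op x y + op x' y') (x : R) :
    op (op x 0) 0 = op (x - op 0 x) 0 := by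
  have h := add_op_zero hadd (x - op 0 x) (op 0 x)
  rw [sub_add_cancel, op_zero_eq_op_op_zero_zero_add hdist hadd x] at h
  exact add_right_cancel h

end Biadditive

/-- If an abelian group `R` carries a rack operation `▷` that is a homomorphism
of abelian groups `R × R → R`, then with `A y = 0 ▷ y` and `E x = x ▷ 0`:
`A` is an automorphism of the abelian group, `E` an endomorphism,
`x ▷ y = E x + A y`, and `E² = E ∘ (id − A)`. -/
theorem stmt_12 {R : Type*} [AddCommGroup R] (op : R → R → R)
    (hbij : ∀ x : R, Function.Bijective (op x))
    (hdist : ∀ x y z : R, op x (op y z) = op (op x y) (op x z))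
    (hadd : ∀ x x' y y' : R, op (x + x') (y + y') = op x y + op x' y') :
    Function.Bijective (fun y : R => op 0 y) ∧
    (∀ y y' : R, op 0 (y + y') = op 0 y + op 0 y') ∧
    (∀ x x' : R, op (x + x') 0 = op x 0 + op x' 0) ∧
    (∀ x y : R, op x y = op x 0 + op 0 y) ∧
    (∀ x : R, op (op x 0) 0 = op (x - op 0 x) 0) :=
  ⟨hbij 0, zero_op_add hadd, add_op_zero hadd, op_eq_op_zero_add_zero_op hadd,
    op_op_zero_zero hdist hadd⟩
end
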